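/- arXiv:1207.1199 — 3 statements merged into one kernel-verified Lean document; each statement's English description precedes it below -/
import Mathlib

section
/- Let $G$ be a group, $H \leq G$ a subgroup, and $1 \leq p < \infty$. If there exists a thin invariant exhaustion of $\ell^p H$, then there exists a thin invariant exhaustion of $\ell^p G$. -/
open scoped ENNReal

/-- Left translation by `g` on `ℓ^p(G)`: `(g ⬝ f)(x) = f(g⁻¹ x)`. -/
noncomputable def lpTranslate {G : Type*} [Group G] {p : ℝ≥0∞} (g : G)
    (f : lp (fun _ : G => ℂ) p) : lp (fun _ : G => ℂ) p :=
  ⟨fun x => f (g⁻¹ * x), by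
    show Memℓp (fun x : G => f (g⁻¹ * x)) p
    have h : Memℓp (f : ∀ _ : G, ℂ) p := lp.memℓp f
    rcases p.trichotomy with rfl | rfl | hp
    · rw [memℓp_zero_iff] at h ⊢
      exact h.preimage ((Equiv.mulLeft g⁻¹).injective.injOn)
    · rw [memℓp_infty_iff] at h ⊢
      have : Set.range (fun x : G => ‖f (g⁻¹ * x)‖) = Set.range (fun x : G => ‖f x‖) :=
        (Equiv.mulLeft g⁻¹).surjective.range_comp (fun x => ‖f x‖)
      rw [this]; exact h
    · rw [memℓp_gen_iff hp] at h ⊢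
      exact ((Equiv.mulLeft g⁻¹).summable_iff (f := fun x => ‖f x‖ ^ p.toReal)).2 h⟩

/-- `(E i)` is a thin invariant exhaustion of `ℓ^p(G)`: an increasing sequence of
closed `G`-invariant subspaces with dense union, such that some nonzero closed
`G`-invariant subspace `F` meets every `E i` trivially. -/
def IsThinInvariantExhaustion {G : Type*} [Group G] (p : ℝ≥0∞) [Fact (1 ≤ p)]
    (E : ℕ → Submodule ℂ (lp (fun _ : G => ℂ) p)) : Prop :=
  (∀ i, IsClosed (E i : Set (lp (fun _ : G => ℂ) p))) ∧
  Monotone E ∧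
  (∀ i (g : G), ∀ f ∈ E i, lpTranslate g f ∈ E i) ∧
  Dense (⋃ i, (E i : Set (lp (fun _ : G => ℂ) p))) ∧
  ∃ F : Submodule ℂ (lp (fun _ : G => ℂ) p),
    IsClosed (F : Set (lp (fun _ : G => ℂ) p)) ∧
    (∀ (g : G), ∀ f ∈ F, lpTranslate g f ∈ F) ∧
    F ≠ ⊥ ∧ ∀ i, E i ⊓ F = ⊥

/-!
Restricting to the left cosets `xH` splits `ℓ^p G` into copies of `ℓ^p H`, so a subspace
`V ⊆ ℓ^p H` induces the subspace of those `f` all of whose coset restrictions lie in `V`.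
Induction preserves closedness and monotonicity, commutes with `⊓` and sends `⊥` to `⊥`, and
always yields a `G`-invariant subspace. If `V` is `H`-invariant, the induced subspace contains
the extension by zero of `V` to every coset; hence the induced `E i` have a union whose closure
contains every δ-function and so is dense, while the induced `F` is nonzero and meets the
induced `E i` in the subspace induced from `E i ⊓ F = 0`.
-/

open Function

section InjectiveReindexing

variable {ι κ 𝕜 E : Type*} [NormedAddCommGroup E] {p : ℝ≥0∞} {φ : ι → κ}

theorem Memℓp.comp_injective {f : κ → E} (hf : Memℓp f p) (hφ : Injective φ) :
    Memℓp (f ∘ φ) p := by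
  rcases p.trichotomy with rfl | rfl | hp
  · rw [memℓp_zero_iff] at hf ⊢
    exact hf.preimage hφ.injOn
  · rw [memℓp_infty_iff] at hf ⊢
    exact hf.mono (Set.range_comp_subset_range φ (‖f ·‖))
  · rw [memℓp_gen_iff hp] at hf ⊢
    exact hf.comp_injective hφ

theorem norm_rpow_extend_zero (f : ι → E) {r : ℝ} (hr : r ≠ 0) :
    (fun j => ‖extend φ f 0 j‖ ^ r) = extend φ (fun i => ‖f i‖ ^ r) 0 := by
  funext j
  rw [apply_extend (fun x : E => ‖x‖ ^ r)]
  congr 1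
  funext j
  simp [Real.zero_rpow hr]

theorem Memℓp.extend_zero {f : ι → E} (hf : Memℓp f p) (hφ : Injective φ) :
    Memℓp (extend φ f 0) p := by
  rcases p.trichotomy with rfl | rfl | hp
  · rw [memℓp_zero_iff] at hf ⊢
    exact (hf.image φ).subset support_extend_zero_subset
  · rw [memℓp_infty_iff] at hf ⊢
    obtain ⟨C, hC⟩ := hf
    refine ⟨max C 0, Set.forall_mem_range.2 fun j => ?_⟩
    by_cases hj : ∃ i, φ i = j
    · obtain ⟨i, rfl⟩ := hj
      rw [hφ.extend_apply]
      exact (hC ⟨i, rfl⟩).trans (le_max_left _ _)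
    · simp [extend_apply' _ _ _ hj]
  · rw [memℓp_gen_iff hp] at hf ⊢
    rw [norm_rpow_extend_zero f hp.ne']
    exact (summable_extend_zero hφ).2 hf

namespace lp

variable [Fact (1 ≤ p)]

theorem norm_le_of_comp_injective (hφ : Injective φ) {f : lp (fun _ : κ => E) p}
    {g : lp (fun _ : ι => E) p} (hg : ∀ i, g i = f (φ i)) : ‖g‖ ≤ ‖f‖ := by
  have hp0 : p ≠ 0 := (zero_lt_one.trans_le Fact.out).ne'
  rcases eq_or_ne p ∞ with rfl | hp
  · exact norm_le_of_forall_le (norm_nonneg f) fun i => hg i ▸ norm_apply_le_norm hp0 f (φ i)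
  have hp' : 0 < p.toReal := ENNReal.toReal_pos hp0 hp
  refine norm_le_of_forall_sum_le hp' (norm_nonneg f) fun s => ?_
  calc ∑ i ∈ s, ‖g i‖ ^ p.toReal = ∑ j ∈ s.map ⟨φ, hφ⟩, ‖f j‖ ^ p.toReal := by
        simp [hg]
    _ ≤ ‖f‖ ^ p.toReal := sum_rpow_le_norm_rpow hp' f _

theorem norm_le_of_eq_extend_zero (hφ : Injective φ) {f : lp (fun _ : ι => E) p}
    {g : lp (fun _ : κ => E) p} (hg : ⇑g = extend φ f 0) : ‖g‖ ≤ ‖f‖ := by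
  have hp0 : p ≠ 0 := (zero_lt_one.trans_le Fact.out).ne'
  rcases eq_or_ne p ∞ with rfl | hp
  · refine norm_le_of_forall_le (norm_nonneg f) fun j => ?_
    by_cases hj : ∃ i, φ i = j
    · obtain ⟨i, rfl⟩ := hj
      rw [hg, hφ.extend_apply]
      exact norm_apply_le_norm hp0 f i
    · simp [hg, extend_apply' _ _ _ hj]
  have hp' : 0 < p.toReal := ENNReal.toReal_pos hp0 hp
  refine norm_le_of_tsum_le hp' (norm_nonneg f) ?_
  rw [hg, norm_rpow_extend_zero _ hp'.ne', tsum_extend_zero hφ, norm_rpow_eq_tsum hp']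

variable [NormedRing 𝕜] [Module 𝕜 E] [IsBoundedSMul 𝕜 E]

variable (𝕜) in
noncomputable def compInjective (hφ : Injective φ) :
    lp (fun _ : κ => E) p →L[𝕜] lp (fun _ : ι => E) p :=
  LinearMap.mkContinuous
    { toFun f := ⟨f ∘ φ, (lp.memℓp f).comp_injective hφ⟩
      map_add' _ _ := rfl
      map_smul' _ _ := rfl }
    1 fun f => by rw [one_mul]; exact norm_le_of_comp_injective hφ fun _ => rfl

variable (𝕜) in
noncomputable def extendZero (hφ : Injective φ) :
    lp (fun _ : ι => E) p →L[𝕜] lp (fun _ : κ => E) p :=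
  LinearMap.mkContinuous
    { toFun f := ⟨extend φ f 0, (lp.memℓp f).extend_zero hφ⟩
      map_add' f g := lp.ext <| by
        convert extend_add φ (f : ι → E) g 0 0 using 2 <;> first | rfl | simp
      map_smul' c f := lp.ext <| by
        convert extend_smul c φ (f : ι → E) 0 using 2 <;> simp }
    1 fun f => by rw [one_mul]; exact norm_le_of_eq_extend_zero hφ rfl

@[simp]
theorem compInjective_apply (hφ : Injective φ) (f : lp (fun _ : κ => E) p) (i : ι) :
    compInjective 𝕜 hφ f i = f (φ i) := rfl

@[simp]
theorem coe_extendZero (hφ : Injective φ) (f : lp (fun _ : ι => E) p) :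
    ⇑(extendZero 𝕜 hφ f) = extend φ f 0 := rfl

@[simp]
theorem compInjective_extendZero (hφ : Injective φ) (f : lp (fun _ : ι => E) p) :
    compInjective 𝕜 hφ (extendZero 𝕜 hφ f) = f :=
  lp.ext <| funext fun i => by simp [hφ.extend_apply]

theorem extendZero_injective (hφ : Injective φ) :
    Injective (extendZero 𝕜 hφ : lp (fun _ : ι => E) p → lp (fun _ : κ => E) p) :=
  LeftInverse.injective (compInjective_extendZero hφ)

theorem extendZero_single [DecidableEq ι] [DecidableEq κ] (hφ : Injective φ) (i : ι) (a : E) :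
    extendZero 𝕜 hφ (lp.single p i a) = lp.single (E := fun _ => E) p (φ i) a := by
  refine lp.ext (funext fun j => ?_)
  by_cases hj : ∃ i', φ i' = j
  · obtain ⟨i', rfl⟩ := hj
    simp [hφ.extend_apply, lp.single_apply, Pi.single_apply, hφ.eq_iff]
  · rw [coe_extendZero, extend_apply' _ _ _ hj,
      lp.single_apply_ne _ _ _ fun h : j = φ i => hj ⟨i, h.symm⟩]
    rfl

end lp

end InjectiveReindexing

section Cosets

variable {G : Type*} [Group G] (H : Subgroup G) {p : ℝ≥0∞} [Fact (1 ≤ p)]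

theorem Subgroup.mul_coe_injective (x : G) : Injective fun h : H => x * (h : G) :=
  (mul_right_injective x).comp Subtype.val_injective

noncomputable def cosetRestrict (x : G) : lp (fun _ : G => ℂ) p →L[ℂ] lp (fun _ : H => ℂ) p :=
  lp.compInjective ℂ (H.mul_coe_injective x)

noncomputable def cosetExtend (x : G) : lp (fun _ : H => ℂ) p →L[ℂ] lp (fun _ : G => ℂ) p :=
  lp.extendZero ℂ (H.mul_coe_injective x)

@[simp]
theorem cosetRestrict_apply (x : G) (f : lp (fun _ : G => ℂ) p) (h : H) :
    cosetRestrict H x f h = f (x * h) := rfl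

theorem cosetRestrict_lpTranslate (g x : G) (f : lp (fun _ : G => ℂ) p) :
    cosetRestrict H x (lpTranslate g f) = cosetRestrict H (g⁻¹ * x) f :=
  lp.ext <| funext fun h => congrArg f (mul_assoc g⁻¹ x h).symm

theorem cosetRestrict_cosetExtend_of_mem {x y : G} (hxy : y⁻¹ * x ∈ H)
    (e : lp (fun _ : H => ℂ) p) :
    cosetRestrict H x (cosetExtend H y e) = lpTranslate (⟨y⁻¹ * x, hxy⟩⁻¹ : H) e := by
  refine lp.ext <| funext fun h => ?_
  have hxh : x * (h : G) = y * ((⟨y⁻¹ * x, hxy⟩ * h : H) : G) := by simp [← mul_assoc]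
  simp only [cosetRestrict_apply, cosetExtend, lp.coe_extendZero, hxh,
    (H.mul_coe_injective y).extend_apply]
  simp [lpTranslate]

theorem cosetRestrict_cosetExtend_of_not_mem {x y : G} (hxy : y⁻¹ * x ∉ H)
    (e : lp (fun _ : H => ℂ) p) :
    cosetRestrict H x (cosetExtend H y e) = 0 := by
  refine lp.ext <| funext fun h => extend_apply' _ _ _ ?_
  rintro ⟨h', hh' : y * h' = x * h⟩
  refine hxy ?_
  have : y⁻¹ * x = h' * h⁻¹ := by
    rw [inv_mul_eq_iff_eq_mul, ← mul_assoc, hh', Subgroup.coe_inv, mul_inv_cancel_right]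
  rw [this]
  exact H.mul_mem h'.2 (H.inv_mem h.2)

theorem cosetExtend_single [DecidableEq G] (x : G) (a : ℂ) :
    cosetExtend H x (lp.single p 1 a) = lp.single (E := fun _ : G => ℂ) p x a := by
  simpa [cosetExtend] using lp.extendZero_single (𝕜 := ℂ) (H.mul_coe_injective x) 1 a

end Cosets

section InducedSubmodule

variable {G : Type*} [Group G] (H : Subgroup G) {p : ℝ≥0∞} [Fact (1 ≤ p)]

noncomputable def inducedSubmodule (V : Submodule ℂ (lp (fun _ : H => ℂ) p)) :
    Submodule ℂ (lp (fun _ : G => ℂ) p) :=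
  ⨅ x : G, V.comap (cosetRestrict H x).toLinearMap

variable {H}

theorem mem_inducedSubmodule {V : Submodule ℂ (lp (fun _ : H => ℂ) p)}
    {f : lp (fun _ : G => ℂ) p} : f ∈ inducedSubmodule H V ↔ ∀ x, cosetRestrict H x f ∈ V := by
  simp [inducedSubmodule]

theorem isClosed_inducedSubmodule {V : Submodule ℂ (lp (fun _ : H => ℂ) p)}
    (hV : IsClosed (V : Set (lp (fun _ : H => ℂ) p))) :
    IsClosed (inducedSubmodule H V : Set (lp (fun _ : G => ℂ) p)) := by
  simp only [inducedSubmodule, Submodule.coe_iInf, Submodule.comap_coe]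
  exact isClosed_iInter fun x => hV.preimage (cosetRestrict H x).continuous

variable (H) in
theorem inducedSubmodule_mono :
    Monotone (inducedSubmodule H : Submodule ℂ (lp (fun _ : H => ℂ) p) → _) :=
  fun _ _ hVW => iInf_mono fun _ => Submodule.comap_mono hVW

theorem inducedSubmodule_inf (V W : Submodule ℂ (lp (fun _ : H => ℂ) p)) :
    inducedSubmodule H (V ⊓ W) = inducedSubmodule H V ⊓ inducedSubmodule H W := by
  simp only [inducedSubmodule, Submodule.comap_inf, iInf_inf_eq]

variable (H p) in
theorem inducedSubmodule_bot :
    inducedSubmodule H (⊥ : Submodule ℂ (lp (fun _ : H => ℂ) p)) = ⊥ := by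
  refine (Submodule.eq_bot_iff _).2 fun f hf => lp.ext <| funext fun x => ?_
  simpa using congrArg (· 1) ((Submodule.mem_bot ℂ).1 (mem_inducedSubmodule.1 hf x))

theorem lpTranslate_mem_inducedSubmodule {V : Submodule ℂ (lp (fun _ : H => ℂ) p)} (g : G)
    {f : lp (fun _ : G => ℂ) p} (hf : f ∈ inducedSubmodule H V) :
    lpTranslate g f ∈ inducedSubmodule H V :=
  mem_inducedSubmodule.2 fun x => cosetRestrict_lpTranslate H g x f ▸ mem_inducedSubmodule.1 hf _

theorem cosetExtend_mem_inducedSubmodule {V : Submodule ℂ (lp (fun _ : H => ℂ) p)}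
    (hV : ∀ h : H, ∀ e ∈ V, lpTranslate h e ∈ V) {e : lp (fun _ : H => ℂ) p} (he : e ∈ V)
    (y : G) : cosetExtend H y e ∈ inducedSubmodule H V := by
  refine mem_inducedSubmodule.2 fun x => ?_
  by_cases hxy : y⁻¹ * x ∈ H
  · rw [cosetRestrict_cosetExtend_of_mem H hxy]
    exact hV _ e he
  · rw [cosetRestrict_cosetExtend_of_not_mem H hxy]
    exact V.zero_mem

theorem inducedSubmodule_ne_bot {V : Submodule ℂ (lp (fun _ : H => ℂ) p)}
    (hV : ∀ h : H, ∀ e ∈ V, lpTranslate h e ∈ V) (hV₀ : V ≠ ⊥) : inducedSubmodule H V ≠ ⊥ := by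
  obtain ⟨e, he, he₀⟩ := (Submodule.ne_bot_iff V).1 hV₀
  exact (Submodule.ne_bot_iff _).2 ⟨cosetExtend H 1 e, cosetExtend_mem_inducedSubmodule hV he 1,
    (map_ne_zero_iff _ (lp.extendZero_injective _)).2 he₀⟩

theorem dense_iUnion_inducedSubmodule (hp : p ≠ ∞) {E : ℕ → Submodule ℂ (lp (fun _ : H => ℂ) p)}
    (hE : Monotone E) (hEinv : ∀ i, ∀ h : H, ∀ e ∈ E i, lpTranslate h e ∈ E i)
    (hEdense : Dense (⋃ i, (E i : Set (lp (fun _ : H => ℂ) p)))) :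
    Dense (⋃ i, (inducedSubmodule H (E i) : Set (lp (fun _ : G => ℂ) p))) := by
  classical
  set S := ⨆ i, inducedSubmodule H (E i)
  have hS : (S : Set (lp (fun _ : G => ℂ) p)) = ⋃ i, (inducedSubmodule H (E i) : Set _) :=
    Submodule.coe_iSup_of_directed _ ((inducedSubmodule_mono H).comp hE).directed_le
  have hext : ∀ x e, cosetExtend H x e ∈ S.topologicalClosure := fun x e => by
    rw [← SetLike.mem_coe, Submodule.topologicalClosure_coe, hS]
    refine map_mem_closure (cosetExtend H x).continuous (hEdense e) fun e' he' => ?_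
    obtain ⟨i, hi⟩ := Set.mem_iUnion.1 he'
    exact Set.mem_iUnion.2 ⟨i, cosetExtend_mem_inducedSubmodule (hEinv i) hi x⟩
  intro f
  rw [← hS, ← Submodule.topologicalClosure_coe, ← (lp.hasSum_single hp f).tsum_eq]
  exact tsum_mem S.isClosed_topologicalClosure fun x =>
    cosetExtend_single (p := p) H x (f x) ▸ hext x _

end InducedSubmodule

/-- If a subgroup `H` of `G` admits a thin invariant exhaustion of `ℓ^p(H)`
(`1 ≤ p < ∞`), then `G` admits a thin invariant exhaustion of `ℓ^p(G)`. -/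
theorem stmt5 (G : Type*) [Group G] (H : Subgroup G) (p : ℝ≥0∞)
    [hp1 : Fact (1 ≤ p)] (hp2 : p ≠ ∞)
    (h : ∃ E : ℕ → Submodule ℂ (lp (fun _ : H => ℂ) p),
      IsThinInvariantExhaustion p E) :
    ∃ E : ℕ → Submodule ℂ (lp (fun _ : G => ℂ) p),
      IsThinInvariantExhaustion p E := by
  obtain ⟨E, hEclosed, hEmono, hEinv, hEdense, F, hFclosed, hFinv, hF₀, hEF⟩ := h
  refine ⟨fun i => inducedSubmodule H (E i), fun i => isClosed_inducedSubmodule (hEclosed i),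
    (inducedSubmodule_mono (p := p) H).comp hEmono, fun _ g _ => lpTranslate_mem_inducedSubmodule g,
    dense_iUnion_inducedSubmodule hp2 hEmono hEinv hEdense, inducedSubmodule H F,
    isClosed_inducedSubmodule hFclosed, fun g _ => lpTranslate_mem_inducedSubmodule g,
    inducedSubmodule_ne_bot hFinv hF₀, fun i => ?_⟩
  rw [← inducedSubmodule_inf, hEF i, inducedSubmodule_bot]
end

section
/- Every infinite elementary amenable torsion group is locally finite. -/
universe u

/-- The class of elementary amenable groups: the smallest class of groups
containing all finite groups and all abelian groups and closed under taking
subgroups, quotients, extensions and directed unions. -/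
inductive ElementaryAmenable : (G : Type u) → [inst : Group G] → Prop where
  | of_finite (G : Type u) [Group G] (h : Finite G) : ElementaryAmenable G
  | of_abelian (G : Type u) [Group G] (h : ∀ a b : G, a * b = b * a) :
      ElementaryAmenable G
  | subgroup (G : Type u) [Group G] (H : Subgroup G)
      (h : ElementaryAmenable G) : ElementaryAmenable H
  | quotient (G : Type u) [Group G] (N : Subgroup G) [N.Normal]
      (h : ElementaryAmenable G) : ElementaryAmenable (G ⧸ N)
  | extension (G : Type u) [Group G] (N : Subgroup G) [N.Normal]
      (h1 : ElementaryAmenable N) (h2 : ElementaryAmenable (G ⧸ N)) :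
      ElementaryAmenable G
  | directed_union (G : Type u) [Group G] (ι : Type u) (H : ι → Subgroup G)
      (hdir : Directed (· ≤ ·) H) (h : ∀ i, ElementaryAmenable (H i))
      (htop : (⨆ i, H i) = ⊤) : ElementaryAmenable G

/-!
Induct on elementary amenability, proving the stronger claim that every finitely generated torsion
section of `G` is finite; passing to sections is what makes subgroups and quotients harmless.
Abelian groups are handled by the structure theorem. For an extension `N → G → G ⧸ N`, a section
`H` has a normal subgroup `M` with `M` a section of `N` and `H ⧸ M` a section of `G ⧸ N`; then
`H ⧸ M` is finite, so `M` has finite index in `H`, is finitely generated by Schreier's lemma, and is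
finite too. A finitely generated section of a directed union already is a section of one member,
since finitely many lifts of its generators land in a single member.
-/

open Function

variable {G G' H : Type u} [Group G] [Group G'] [Group H]

/-- A section (subquotient) of `G`. The subgroup is encoded as an injective hom from an arbitrary
group, so that sections compose without transport along isomorphisms. -/
def IsSection (G : Type u) [Group G] (H : Type u) [Group H] : Prop :=
  ∃ (K : Type u) (_ : Group K) (i : K →* G) (π : K →* H), Injective i ∧ Surjective π

namespace IsSection

theorem of_injective (f : H →* G) (hf : Injective f) : IsSection G H :=
  ⟨H, _, f, MonoidHom.id H, hf, surjective_id⟩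

theorem of_surjective (f : G →* H) (hf : Surjective f) : IsSection G H :=
  ⟨G, _, MonoidHom.id G, f, injective_id, hf⟩

theorem trans (h₁ : IsSection G G') (h₂ : IsSection G' H) : IsSection G H := by
  obtain ⟨K₁, _, i₁, π₁, hi₁, hπ₁⟩ := h₁
  obtain ⟨K₂, _, i₂, π₂, hi₂, hπ₂⟩ := h₂
  -- pull `K₂ ≅ i₂.range` back along `π₁`
  let L := i₂.range.comap π₁
  let π : L →* K₂ := (MonoidHom.ofInjective hi₂).symm.toMonoidHom.comp (π₁.subgroupComap i₂.range)
  have hπ : Surjective π :=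
    (MonoidHom.ofInjective hi₂).symm.surjective.comp
      (π₁.subgroupComap_surjective_of_surjective i₂.range hπ₁)
  exact ⟨L, _, i₁.comp L.subtype, π₂.comp π, hi₁.comp L.subtype_injective, hπ₂.comp hπ⟩

theorem finite [Finite G] (h : IsSection G H) : Finite H := by
  obtain ⟨K, _, i, π, hi, hπ⟩ := h
  have : Finite K := Finite.of_injective i hi
  exact Finite.of_surjective π hπ

theorem mul_comm (hG : ∀ a b : G, a * b = b * a) (h : IsSection G H) :
    ∀ a b : H, a * b = b * a := by
  obtain ⟨K, _, i, π, hi, hπ⟩ := h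
  intro a b
  obtain ⟨x, rfl⟩ := hπ a
  obtain ⟨y, rfl⟩ := hπ b
  have hxy : x * y = y * x := hi (by rw [map_mul, map_mul, hG])
  rw [← map_mul, ← map_mul, hxy]

theorem exists_subgroup_and_quotient (h : IsSection G H) (N : Subgroup G) [N.Normal] :
    ∃ (M : Subgroup H) (_ : M.Normal), IsSection N M ∧ IsSection (G ⧸ N) (H ⧸ M) := by
  obtain ⟨K, _, i, π, hi, hπ⟩ := h
  let N' := N.comap i
  let M := N'.map π
  have : M.Normal := Subgroup.Normal.map inferInstance π hπ
  refine ⟨M, this, ⟨N', _, i.subgroupComap N, π.subgroupMap N', ?_, π.subgroupMap_surjective N'⟩,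
    ⟨K ⧸ N', _, QuotientGroup.map N' N i le_rfl,
      QuotientGroup.map N' M π (Subgroup.le_comap_map π N'), ?_, ?_⟩⟩
  · exact fun a b hab => Subtype.ext (hi (congrArg Subtype.val hab))
  · refine (MonoidHom.ker_eq_bot_iff _).mp ?_
    rw [QuotientGroup.ker_map, QuotientGroup.map_mk'_self]
  · exact QuotientGroup.map_surjective_of_surjective _ _ π (QuotientGroup.mk_surjective.comp hπ) _

end IsSection

theorem MonoidHom.exists_finset_map_closure_eq_top {K : Type*} [Group K] {π : K →* H}
    (hπ : Surjective π) [Group.FG H] : ∃ S : Finset K, (Subgroup.closure (S : Set K)).map π = ⊤ := by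
  classical
  obtain ⟨T, hT⟩ := Group.FG.out (G := H)
  refine ⟨T.image (surjInv hπ), ?_⟩
  rw [MonoidHom.map_closure, Finset.coe_image, ← Set.image_comp, comp_surjInv, Set.image_id, hT]

theorem Subgroup.exists_closure_finset_le_of_directed {ι : Type*} [Nonempty ι] {K : ι → Subgroup G}
    (hK : Directed (· ≤ ·) K) (htop : ⨆ i, K i = ⊤) (S : Finset G) :
    ∃ j, Subgroup.closure (S : Set G) ≤ K j := by
  have hS : (S : Set G) ⊆ ⋃ i, (K i : Set G) := by
    rw [← Subgroup.coe_iSup_of_directed hK, htop, Subgroup.coe_top]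
    exact Set.subset_univ _
  obtain ⟨j, hj⟩ := Directed.exists_mem_subset_of_finset_subset_biUnion hK hS
  exact ⟨j, (Subgroup.closure_le _).mpr hj⟩

theorem IsSection.exists_of_directed [Group.FG H] (h : IsSection G H) {ι : Type*} [Nonempty ι]
    {K : ι → Subgroup G} (hK : Directed (· ≤ ·) K) (htop : ⨆ i, K i = ⊤) :
    ∃ j, IsSection (K j) H := by
  classical
  obtain ⟨L, _, i, π, hi, hπ⟩ := h
  obtain ⟨S, hS⟩ := MonoidHom.exists_finset_map_closure_eq_top hπ
  obtain ⟨j, hj⟩ := Subgroup.exists_closure_finset_le_of_directed hK htop (S.image i)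
  let C := Subgroup.closure (S : Set L)
  have hSj : C.map i ≤ K j := by
    rwa [MonoidHom.map_closure, ← Finset.coe_image]
  refine ⟨j, C, _, (i.comp C.subtype).codRestrict (K j) fun x => hSj ⟨x, x.2, rfl⟩,
    π.comp C.subtype, fun a b hab => Subtype.ext (hi (congrArg Subtype.val hab)), ?_⟩
  intro y
  obtain ⟨x, hx, rfl⟩ : y ∈ C.map π := hS ▸ Subgroup.mem_top y
  exact ⟨⟨x, hx⟩, rfl⟩

theorem ElementaryAmenable.finite_of_isSection (hG : ElementaryAmenable G) (h : IsSection G H)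
    (htor : IsMulTorsion H) [Group.FG H] : Finite H := by
  induction hG generalizing H with
  | of_finite G _ => exact h.finite
  | of_abelian G hab =>
    let _ : CommGroup H := { mul_comm := h.mul_comm hab }
    exact CommGroup.finite_of_fg_isMulTorsion H htor
  | subgroup G K _ ih =>
    exact ih ((IsSection.of_injective K.subtype K.subtype_injective).trans h) htor
  | quotient G N _ ih =>
    exact ih ((IsSection.of_surjective _ (QuotientGroup.mk'_surjective N)).trans h) htor
  | extension G N _ _ ihN ihQ =>
    obtain ⟨M, _, hM, hQ⟩ := h.exists_subgroup_and_quotient N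
    have : Finite (H ⧸ M) := ihQ hQ (htor.of_surjective (QuotientGroup.mk'_surjective M))
    have : M.FiniteIndex := M.finiteIndex_of_finite_quotient
    have : Group.FG M := Subgroup.fg_of_index_ne_zero M
    have : Finite M := ihN hM (htor.subgroup M)
    exact Finite.of_subgroup_quotient M
  | directed_union G ι K hK _ htop ih =>
    cases isEmpty_or_nonempty ι with
    | inl _ =>
      rw [iSup_of_empty] at htop
      have : Subsingleton G := Subgroup.subsingleton_iff.mp (subsingleton_of_bot_eq_top htop)
      exact h.finite
    | inr _ =>
      obtain ⟨j, hj⟩ := h.exists_of_directed hK htop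
      exact ih j hj htor

theorem stmt13_general (G : Type u) [Group G]
    (hEA : ElementaryAmenable G) (htor : ∀ g : G, IsOfFinOrder g) :
    ∀ S : Finset G, Finite (Subgroup.closure (S : Set G)) := fun S =>
  hEA.finite_of_isSection (.of_injective _ (Subgroup.closure (S : Set G)).subtype_injective)
    (IsMulTorsion.subgroup htor _)

/-- Every infinite elementary amenable torsion group is locally finite. -/
theorem stmt13 (G : Type u) [Group G] [Infinite G]
    (hEA : ElementaryAmenable G) (htor : ∀ g : G, IsOfFinOrder g) :
    ∀ S : Finset G, Finite (Subgroup.closure (S : Set G)) :=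
  stmt13_general G hEA htor
end

section
/- Let $p \geq 1$ and let $(\mu_j)_{j \geq 1}$ be probability measures on finite abelian groups $A_j$ of cardinalities $c_j \geq 2$, with $\mu_j$ uniform on $A_j \setminus \{0\}$. If $\sum_{j=1}^\infty (c_j - 1)^{1-p} < \infty$, then the product measure $\mu = \prod_j \mu_j$ on $\prod_j A_j$ has Fourier transform in $\ell^p$ of the dual group $\bigoplus_j \widehat{A_j}$. -/
/-!
The Fourier coefficient at `χ` factorizes over the finite support of `χ`, and on a nontrivial
character `ψ` of `A_j` the uniform measure on `A_j ∖ {0}` has coefficient `-1/(c_j - 1)`,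
because `ψ` sums to zero over `A_j` and `ψ 0 = 1`. So `‖μ̂ χ‖ ^ p = ∏_{j ∈ supp χ} (c_j - 1)^(-p)`.
Summing over all `χ` supported in `{0, …, N-1}` gives at most
`∏_{j < N} (1 + (c_j - 1)^(1-p)) ≤ exp ∑_j (c_j - 1)^(1-p)`, since `A_j` has `c_j` characters.
-/

open MeasureTheory Finset
open scoped Classical

section CylinderMeasure

variable {A : ℕ → Type*} [∀ j, MeasurableSpace (A j)] {μs : ∀ j, Measure (A j)}
  [∀ j, IsProbabilityMeasure (μs j)] {μ : Measure (∀ j, A j)}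

theorem measure_cylinder_finset
    (hμ : ∀ (n : ℕ) (s : ∀ j, Set (A j)),
      μ {x | ∀ j < n, x j ∈ s j} = ∏ j ∈ range n, μs j (s j))
    (S : Finset ℕ) (s : ∀ j, Set (A j)) :
    μ {x | ∀ j ∈ S, x j ∈ s j} = ∏ j ∈ S, μs j (s j) := by
  obtain ⟨n, hSn⟩ := S.exists_nat_subset_range
  have hset : {x : ∀ j, A j | ∀ j ∈ S, x j ∈ s j}
      = {x | ∀ j < n, x j ∈ if j ∈ S then s j else Set.univ} := by
    ext x
    refine ⟨fun h j _ => ?_, fun h j hj => by simpa [hj] using h j (mem_range.1 (hSn hj))⟩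
    split_ifs with hj
    exacts [h j hj, trivial]
  rw [hset, hμ, ← prod_subset hSn fun j _ hj => by rw [if_neg hj, measure_univ]]
  exact prod_congr rfl fun j hj => by rw [if_pos hj]

theorem map_restrict_eq_pi
    (hμ : ∀ (n : ℕ) (s : ∀ j, Set (A j)),
      μ {x | ∀ j < n, x j ∈ s j} = ∏ j ∈ range n, μs j (s j))
    (S : Finset ℕ) :
    μ.map S.restrict = Measure.pi fun j : S => μs j := by
  refine (Measure.pi_eq fun s hs => ?_).symm
  rw [Measure.map_apply S.measurable_restrict (.univ_pi hs)]
  have hset : S.restrict ⁻¹' Set.univ.pi s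
      = {x | ∀ j ∈ S, x j ∈ if h : j ∈ S then s ⟨j, h⟩ else Set.univ} := by
    ext x
    simp only [Set.mem_preimage, Set.mem_univ_pi, Finset.restrict, Subtype.forall,
      Set.mem_ofPred_eq]
    exact forall₂_congr fun j hj => by rw [dif_pos hj]
  rw [hset, measure_cylinder_finset hμ, ← prod_coe_sort]
  exact Fintype.prod_congr _ _ fun j => by rw [dif_pos j.2]

theorem integral_prod_eq_prod_integral {𝕜 : Type*} [RCLike 𝕜]
    (hμ : ∀ (n : ℕ) (s : ∀ j, Set (A j)),
      μ {x | ∀ j < n, x j ∈ s j} = ∏ j ∈ range n, μs j (s j))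
    (S : Finset ℕ) {φ : ∀ j, A j → 𝕜} (hφ : ∀ j, Measurable (φ j)) :
    ∫ x, ∏ j ∈ S, φ j (x j) ∂μ = ∏ j ∈ S, ∫ a, φ j a ∂μs j := by
  have hmeas : Measurable fun y : ∀ j : S, A j => ∏ j : S, φ j (y j) :=
    Finset.measurable_prod _ fun j _ => (hφ j).comp (measurable_pi_apply j)
  calc ∫ x, ∏ j ∈ S, φ j (x j) ∂μ = ∫ y, ∏ j : S, φ j (y j) ∂(μ.map S.restrict) := by
        rw [integral_map S.measurable_restrict.aemeasurable hmeas.aestronglyMeasurable]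
        simp_rw [Finset.restrict, prod_coe_sort S fun j => φ j _]
    _ = ∏ j : S, ∫ a, φ j a ∂μs j := by
        rw [map_restrict_eq_pi hμ, integral_fintype_prod_eq_prod]
    _ = ∏ j ∈ S, ∫ a, φ j a ∂μs j := prod_coe_sort S fun j => ∫ a, φ j a ∂μs j

end CylinderMeasure

theorem toReal_one_div_natCast_sub_one {n : ℕ} (hn : 1 ≤ n) :
    (1 / ((n : ENNReal) - 1)).toReal = ((n : ℝ) - 1)⁻¹ := by
  rw [one_div, ENNReal.toReal_inv, ENNReal.toReal_sub_of_le (by exact_mod_cast hn) (by simp)]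
  simp

theorem integral_addChar_of_uniform_ne_zero {G : Type*} [AddCommGroup G] [Fintype G]
    [MeasurableSpace G] [DiscreteMeasurableSpace G] {ν : Measure G} [IsFiniteMeasure ν]
    (hν : ∀ a, ν {a} = if a = 0 then 0 else 1 / ((Fintype.card G : ENNReal) - 1))
    {ψ : AddChar G ℂ} (hψ : ψ ≠ 0) :
    ∫ a, ψ a ∂ν = ((-((Fintype.card G : ℝ) - 1)⁻¹ : ℝ) : ℂ) := by
  have hν' : ∀ a ≠ 0, ν.real {a} = ((Fintype.card G : ℝ) - 1)⁻¹ := fun a ha => by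
    rw [measureReal_def, hν, if_neg ha, toReal_one_div_natCast_sub_one Fintype.card_pos]
  have hsum : ∑ a, ψ a = 0 := AddChar.sum_eq_zero_iff_ne_zero.2 hψ
  rw [Fintype.sum_eq_add_sum_compl 0, AddChar.map_zero_eq_one] at hsum
  rw [integral_fintype .of_finite, Fintype.sum_eq_add_sum_compl 0, measureReal_def, hν, if_pos rfl,
    sum_congr rfl fun a ha => by rw [hν' a (by simpa using ha)], ← smul_sum,
    eq_neg_of_add_eq_zero_right hsum]
  simp

theorem integral_prod_addChar_support {A : ℕ → Type*} [∀ j, AddCommGroup (A j)]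
    [∀ j, Fintype (A j)] [∀ j, MeasurableSpace (A j)] [∀ j, DiscreteMeasurableSpace (A j)]
    {μs : ∀ j, Measure (A j)} [∀ j, IsProbabilityMeasure (μs j)] {μ : Measure (∀ j, A j)}
    (hunif : ∀ j (a : A j),
      μs j {a} = if a = 0 then 0 else 1 / ((Fintype.card (A j) : ENNReal) - 1))
    (hμ : ∀ (n : ℕ) (s : ∀ j, Set (A j)),
      μ {x | ∀ j < n, x j ∈ s j} = ∏ j ∈ range n, μs j (s j))
    (χ : Π₀ j, Additive (AddChar (A j) ℂ)) :
    ∫ x, ∏ j ∈ χ.support, Additive.toMul (χ j) (x j) ∂μ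
      = ∏ j ∈ χ.support, ((-((Fintype.card (A j) : ℝ) - 1)⁻¹ : ℝ) : ℂ) := by
  rw [integral_prod_eq_prod_integral hμ _ fun j => .of_discrete]
  refine prod_congr rfl fun j hj => integral_addChar_of_uniform_ne_zero (hunif j) ?_
  -- in `AddChar`, `0` is the trivial character `1`
  exact fun h => DFinsupp.mem_support_iff.1 hj (Additive.toMul.injective (h.trans toMul_zero.symm))

theorem sum_prod_support_le {B : ℕ → Type*} [∀ j, Zero (B j)] [∀ j, Fintype (B j)]
    {w : ℕ → ℝ} (hw : ∀ j, 0 ≤ w j) {T : Finset ℕ} {u : Finset (Π₀ j, B j)}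
    (hu : ∀ χ ∈ u, χ.support ⊆ T) :
    ∑ χ ∈ u, ∏ j ∈ χ.support, w j ≤ ∏ j ∈ T, (1 + ((Fintype.card (B j) : ℝ) - 1) * w j) := by
  let g : ∀ j, B j → ℝ := fun j b => if b = 0 then 1 else w j
  have hg : ∀ j b, 0 ≤ g j b := fun j b => by
    simp only [g]; split_ifs
    exacts [zero_le_one, hw j]
  let Φ : (Π₀ j, B j) → ∀ j : T, B j := fun χ j => χ j
  have hsupp : ∀ χ ∈ u, ∏ j ∈ χ.support, w j = ∏ j : T, g j (Φ χ j) := by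
    intro χ hχ
    rw [prod_coe_sort T fun j => g j (χ j)]
    refine prod_subset_one_on_sdiff (hu χ hχ) (fun j hj => ?_) fun j hj => ?_
    · simp [g, DFinsupp.notMem_support_iff.1 (mem_sdiff.1 hj).2]
    · simp [g, DFinsupp.mem_support_iff.1 hj]
  have hinj : Set.InjOn Φ u := by
    intro χ₁ h₁ χ₂ h₂ heq
    ext j
    by_cases hj : j ∈ T
    · exact congrFun heq ⟨j, hj⟩
    · rw [DFinsupp.notMem_support_iff.1 fun h => hj (hu χ₁ h₁ h),
        DFinsupp.notMem_support_iff.1 fun h => hj (hu χ₂ h₂ h)]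
  have hfactor : ∀ j, ∑ b, g j b = 1 + ((Fintype.card (B j) : ℝ) - 1) * w j := by
    intro j
    rw [Fintype.sum_eq_add_sum_compl 0, sum_congr rfl fun b hb => if_neg (by simpa using hb)]
    simp [g, card_compl, Nat.cast_sub Fintype.card_pos]
  calc ∑ χ ∈ u, ∏ j ∈ χ.support, w j
      = ∑ y ∈ u.image Φ, ∏ j : T, g j (y j) := by
        rw [sum_image hinj]; exact sum_congr rfl hsupp
    _ ≤ ∑ y : ∀ j : T, B j, ∏ j : T, g j (y j) :=
        sum_le_univ_sum_of_nonneg fun y => prod_nonneg fun j _ => hg j _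
    _ = ∏ j : T, ∑ b, g j b := (Fintype.prod_sum fun (j : T) (b : B j) => g j b).symm
    _ = _ := by rw [prod_coe_sort T fun j => ∑ b, g j b]; exact prod_congr rfl fun j _ => hfactor j

theorem summable_prod_support {B : ℕ → Type*} [∀ j, Zero (B j)] [∀ j, Fintype (B j)]
    {w : ℕ → ℝ} (hw : ∀ j, 0 ≤ w j)
    (h : Summable fun j => ((Fintype.card (B j) : ℝ) - 1) * w j) :
    Summable fun χ : Π₀ j, B j => ∏ j ∈ χ.support, w j := by
  have hnn : ∀ j, 0 ≤ ((Fintype.card (B j) : ℝ) - 1) * w j := fun j =>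
    mul_nonneg (sub_nonneg.2 (by exact_mod_cast Fintype.card_pos)) (hw j)
  refine summable_of_sum_le (c := Real.exp (∑' j, ((Fintype.card (B j) : ℝ) - 1) * w j))
    (fun χ => prod_nonneg fun j _ => hw j) fun u => ?_
  obtain ⟨N, hN⟩ := (u.biUnion DFinsupp.support).exists_nat_subset_range
  calc ∑ χ ∈ u, ∏ j ∈ χ.support, w j
      ≤ ∏ j ∈ range N, (1 + ((Fintype.card (B j) : ℝ) - 1) * w j) :=
        sum_prod_support_le hw fun χ hχ => (subset_biUnion_of_mem _ hχ).trans hN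
    _ ≤ ∏ j ∈ range N, Real.exp (((Fintype.card (B j) : ℝ) - 1) * w j) :=
        prod_le_prod (fun j _ => by linarith [hnn j]) fun j _ => by
          linarith [Real.add_one_le_exp (((Fintype.card (B j) : ℝ) - 1) * w j)]
    _ = Real.exp (∑ j ∈ range N, ((Fintype.card (B j) : ℝ) - 1) * w j) := (Real.exp_sum _ _).symm
    _ ≤ Real.exp (∑' j, ((Fintype.card (B j) : ℝ) - 1) * w j) :=
        Real.exp_le_exp.2 (h.sum_le_tsum _ fun j _ => hnn j)

theorem mul_inv_rpow_eq_rpow_one_sub {x : ℝ} (hx : 0 < x) (p : ℝ) :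
    x * x⁻¹ ^ p = x ^ (1 - p) := by
  rw [Real.inv_rpow hx.le, Real.rpow_sub hx, Real.rpow_one, div_eq_mul_inv]

theorem stmt15_general (A : ℕ → Type*) [∀ j, AddCommGroup (A j)] [∀ j, Fintype (A j)]
    [∀ j, MeasurableSpace (A j)] [∀ j, DiscreteMeasurableSpace (A j)]
    (c : ℕ → ℕ) (hc : ∀ j, c j = Fintype.card (A j)) (h2 : ∀ j, 2 ≤ c j)
    (p : ℝ)
    (μs : ∀ j, Measure (A j)) (hμs : ∀ j, IsProbabilityMeasure (μs j))
    (hunif : ∀ j (a : A j), μs j {a} = if a = 0 then 0 else 1 / ((c j : ENNReal) - 1))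
    (μ : Measure (∀ j, A j))
    (hμ : ∀ (n : ℕ) (s : ∀ j, Set (A j)),
      μ {x | ∀ j < n, x j ∈ s j} = ∏ j ∈ Finset.range n, μs j (s j))
    (hsum : Summable fun j => ((c j : ℝ) - 1) ^ (1 - p)) :
    Summable fun χ : Π₀ j, Additive (AddChar (A j) ℂ) =>
      ‖∫ x : ∀ j, A j, (∏ j ∈ χ.support, (Additive.toMul (χ j)) (x j)) ∂μ‖ ^ p := by
  obtain rfl : c = fun j => Fintype.card (A j) := funext hc
  have := hμs
  have hpos : ∀ j, 0 < (Fintype.card (A j) : ℝ) - 1 := fun j => by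
    have : (2 : ℝ) ≤ Fintype.card (A j) := by exact_mod_cast h2 j
    linarith
  have hcoeff : ∀ χ : Π₀ j, Additive (AddChar (A j) ℂ),
      ‖∫ x, ∏ j ∈ χ.support, Additive.toMul (χ j) (x j) ∂μ‖ ^ p
        = ∏ j ∈ χ.support, ((Fintype.card (A j) : ℝ) - 1)⁻¹ ^ p := fun χ => by
    rw [integral_prod_addChar_support hunif hμ, norm_prod,
      ← Real.finsetProd_rpow _ _ fun _ _ => norm_nonneg _]
    refine prod_congr rfl fun j _ => ?_
    rw [Complex.norm_real, norm_neg, Real.norm_of_nonneg (inv_nonneg.2 (hpos j).le)]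
  have hw : ∀ j, 0 ≤ ((Fintype.card (A j) : ℝ) - 1)⁻¹ ^ p := fun j =>
    Real.rpow_nonneg (inv_nonneg.2 (hpos j).le) p
  refine (summable_congr hcoeff).2 (summable_prod_support hw ?_)
  simp only [Fintype.card_congr Additive.toMul, AddChar.card_eq]
  exact hsum.congr fun j => (mul_inv_rpow_eq_rpow_one_sub (hpos j) p).symm

/-- Let `μ_j` be the uniform probability measure on `A_j \ {0}` for finite
abelian groups `A_j` with `|A_j| = c_j ≥ 2`, and let `μ` be a product measure of
the `μ_j` on `Π_j A_j` (characterized on cylinder sets).  If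
`∑_j (c_j - 1)^{1-p} < ∞` (`p ≥ 1`), then the Fourier transform of `μ` lies in
`ℓ^p` of the dual group `⨁_j Â_j`, whose elements are the finitely supported
families of characters `χ = (χ_j)_j`, with `μ̂(χ) = ∫ ∏_j χ_j(x_j) dμ(x)`. -/
theorem stmt15 (A : ℕ → Type*) [∀ j, AddCommGroup (A j)] [∀ j, Fintype (A j)]
    [∀ j, MeasurableSpace (A j)] [∀ j, DiscreteMeasurableSpace (A j)]
    (c : ℕ → ℕ) (hc : ∀ j, c j = Fintype.card (A j)) (h2 : ∀ j, 2 ≤ c j)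
    (p : ℝ) (hp : 1 ≤ p)
    (μs : ∀ j, Measure (A j)) (hμs : ∀ j, IsProbabilityMeasure (μs j))
    (hunif : ∀ j (a : A j), μs j {a} = if a = 0 then 0 else 1 / ((c j : ENNReal) - 1))
    (μ : Measure (∀ j, A j)) (hμprob : IsProbabilityMeasure μ)
    (hμ : ∀ (n : ℕ) (s : ∀ j, Set (A j)),
      μ {x | ∀ j < n, x j ∈ s j} = ∏ j ∈ Finset.range n, μs j (s j))
    (hsum : Summable fun j => ((c j : ℝ) - 1) ^ (1 - p)) :
    Summable fun χ : Π₀ j, Additive (AddChar (A j) ℂ) =>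
      ‖∫ x : ∀ j, A j, (∏ j ∈ χ.support, (Additive.toMul (χ j)) (x j)) ∂μ‖ ^ p :=
  stmt15_general A c hc h2 p μs hμs hunif μ hμ hsum
end
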